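/- arXiv:1012.2218 — 2 statements merged into one kernel-verified Lean document; each statement's English description precedes it below -/
import Mathlib

section
/- A coarse equivalence between geodesic metric spaces is a quasi-isometric equivalence: if f : X → Y is controlled, has controlled coarse inverse g with g ∘ f and f ∘ g at finite distance from the identities, and X, Y are geodesic spaces, then there exist constants L ≥ 1 and C ≥ 0 such that (1/L)·d(x,x') − C ≤ d(f x, f x') ≤ L·d(x,x') + C for all x, x' ∈ X. -/
/-- A map between metric spaces is *controlled* if there is a monotone function
`ρ : ℝ≥0 → ℝ≥0` bounding distances of images in terms of distances of points. -/
def Controlled {X Y : Type*} [MetricSpace X] [MetricSpace Y] (f : X → Y) : Prop :=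
  ∃ ρ : NNReal → NNReal, Monotone ρ ∧ ∀ x y : X, nndist (f x) (f y) ≤ ρ (nndist x y)

/-- Two maps have finite distance if the distances `dist (f x) (g x)` are bounded. -/
def FiniteDist {X Y : Type*} [MetricSpace X] [MetricSpace Y] (f g : X → Y) : Prop :=
  BddAbove (Set.range fun x => dist (f x) (g x))

/-- A metric space is geodesic if any two points are joined by an isometrically
parameterized path. -/
def GeodesicSpace (X : Type*) [MetricSpace X] : Prop :=
  ∀ x y : X, ∃ γ : ℝ → X, γ 0 = x ∧ γ (dist x y) = y ∧
    ∀ s ∈ Set.Icc (0 : ℝ) (dist x y), ∀ t ∈ Set.Icc (0 : ℝ) (dist x y),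
      dist (γ s) (γ t) = |s - t|

lemma controlled_upper {X Y : Type*} [MetricSpace X] [MetricSpace Y] (f : X → Y)
    (hf : Controlled f) (hX : GeodesicSpace X) :
    ∃ A : ℝ, 1 ≤ A ∧ ∀ x x' : X, dist (f x) (f x') ≤ A * dist x x' + A := by
  obtain ⟨ρ, hmono, hρ⟩ := hf
  have hρ0 : (0:ℝ) ≤ (ρ 1 : ℝ) := (ρ 1).coe_nonneg
  refine ⟨(ρ 1 : ℝ) + 1, by linarith, fun x x' => ?_⟩
  set A : ℝ := (ρ 1 : ℝ) + 1 with hA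
  have hA1 : (1:ℝ) ≤ A := by rw [hA]; linarith
  have hA0 : (0:ℝ) ≤ A := by linarith
  obtain ⟨γ, h0, hDend, hiso⟩ := hX x x'
  set D : ℝ := dist x x' with hDdef
  have hD0 : (0:ℝ) ≤ D := dist_nonneg
  set n : ℕ := ⌈D⌉₊ with hn
  have hDn : D ≤ (n:ℝ) := Nat.le_ceil D
  have key : ∀ i : ℕ, dist (f x) (f (γ (min (i:ℝ) D))) ≤ (i:ℝ) * A := by
    intro i
    induction i with
    | zero => simp [min_eq_left hD0, h0]
    | succ i ih =>
      push_cast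
      have hs : min (i:ℝ) D ∈ Set.Icc (0:ℝ) D :=
        ⟨le_min (Nat.cast_nonneg i) hD0, min_le_right _ _⟩
      have ht : min ((i:ℝ)+1) D ∈ Set.Icc (0:ℝ) D :=
        ⟨le_min (by positivity) hD0, min_le_right _ _⟩
      have hdiff : dist (γ (min (i:ℝ) D)) (γ (min ((i:ℝ)+1) D)) ≤ 1 := by
        rw [hiso _ hs _ ht]
        rw [abs_le]
        rcases le_total ((i:ℝ)+1) D with h | h
        · rw [min_eq_left h, min_eq_left (by linarith)]
          constructor <;> linarith
        · rcases le_total (i:ℝ) D with h' | h'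
          · rw [min_eq_left h', min_eq_right h]
            constructor <;> linarith
          · rw [min_eq_right h', min_eq_right h]
            constructor <;> linarith
      have hnn : nndist (γ (min (i:ℝ) D)) (γ (min ((i:ℝ)+1) D)) ≤ 1 := by
        rw [← NNReal.coe_le_coe]
        simpa [← dist_nndist] using hdiff
      have hstep : dist (f (γ (min (i:ℝ) D))) (f (γ (min ((i:ℝ)+1) D))) ≤ (ρ 1 : ℝ) := by
        have := (hρ (γ (min (i:ℝ) D)) (γ (min ((i:ℝ)+1) D))).trans (hmono hnn)
        rw [← NNReal.coe_le_coe] at this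
        simpa [← dist_nndist] using this
      calc dist (f x) (f (γ (min ((i:ℝ)+1) D)))
          ≤ dist (f x) (f (γ (min (i:ℝ) D)))
            + dist (f (γ (min (i:ℝ) D))) (f (γ (min ((i:ℝ)+1) D))) := dist_triangle _ _ _
        _ ≤ (i:ℝ) * A + (ρ 1 : ℝ) := add_le_add ih hstep
        _ ≤ ((i:ℝ)+1) * A := by nlinarith
  have hfin := key n
  rw [min_eq_right hDn, hDend] at hfin
  have hceil : (n:ℝ) ≤ D + 1 := le_of_lt (Nat.ceil_lt_add_one hD0)
  calc dist (f x) (f x') ≤ (n:ℝ) * A := hfin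
    _ ≤ (D + 1) * A := by nlinarith
    _ = A * D + A := by ring

theorem coarse_equivalence_is_quasi_isometry {X Y : Type*} [MetricSpace X] [MetricSpace Y]
    (f : X → Y) (g : Y → X)
    (hf : Controlled f) (hg : Controlled g)
    (hgf : FiniteDist (g ∘ f) id) (hfg : FiniteDist (f ∘ g) id)
    (hX : GeodesicSpace X) (hY : GeodesicSpace Y) :
    ∃ L C : ℝ, 1 ≤ L ∧ 0 ≤ C ∧ ∀ x x' : X,
      (1 / L) * dist x x' - C ≤ dist (f x) (f x') ∧
      dist (f x) (f x') ≤ L * dist x x' + C := by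
  obtain ⟨Af, hAf1, hAf⟩ := controlled_upper f hf hX
  obtain ⟨Ag, hAg1, hAg⟩ := controlled_upper g hg hY
  obtain ⟨K', hK'⟩ := hgf
  set K : ℝ := max K' 0 with hKdef
  have hK0 : (0:ℝ) ≤ K := le_max_right _ _
  have hK : ∀ x : X, dist (g (f x)) x ≤ K := fun x =>
    le_trans (hK' (Set.mem_range_self x)) (le_max_left _ _)
  refine ⟨max Af Ag, max Af (Ag + 2*K), le_trans hAf1 (le_max_left _ _),
    le_trans (by linarith) (le_max_left _ _), fun x x' => ?_⟩
  set L : ℝ := max Af Ag with hL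
  set C : ℝ := max Af (Ag + 2*K) with hC
  have hL1 : (1:ℝ) ≤ L := le_trans hAf1 (le_max_left _ _)
  have hL0 : (0:ℝ) < L := lt_of_lt_of_le one_pos hL1
  have hLg : Ag ≤ L := le_max_right _ _
  have hLf : Af ≤ L := le_max_left _ _
  have hCf : Af ≤ C := le_max_left _ _
  have hCg : Ag + 2*K ≤ C := le_max_right _ _
  have hd0 : (0:ℝ) ≤ dist x x' := dist_nonneg
  have hdf0 : (0:ℝ) ≤ dist (f x) (f x') := dist_nonneg
  constructor
  · have h1 : dist x x' ≤ K + (Ag * dist (f x) (f x') + Ag) + K := by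
      calc dist x x' ≤ dist x (g (f x)) + dist (g (f x)) (g (f x'))
            + dist (g (f x')) x' := dist_triangle4 _ _ _ _
        _ ≤ K + (Ag * dist (f x) (f x') + Ag) + K := by
            have e1 : dist x (g (f x)) ≤ K := by rw [dist_comm]; exact hK x
            exact add_le_add (add_le_add e1 (hAg _ _)) (hK x')
    rw [sub_le_iff_le_add, one_div, inv_mul_eq_div, div_le_iff₀ hL0]
    nlinarith
  · calc dist (f x) (f x') ≤ Af * dist x x' + Af := hAf x x'
      _ ≤ L * dist x x' + C := by nlinarith
end

section
/- Bruhat–Tits fixed point theorem: if a group G acts by isometries on a complete CAT(0) space X with a bounded orbit, then G has a fixed point in X. -/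
/-!
The orbit `S` of a point is a bounded set preserved by `G`. In a CAT(0) space the CN inequality
makes `x ↦ (sup_{s ∈ S} d(x, s))²` uniformly convex along midpoints, so a minimising sequence is
Cauchy and its limit is a point realising the circumradius of `S`; the same inequality shows this
circumcentre is unique. Since `G` permutes `S` isometrically it must fix the circumcentre.
-/

/-- A metric space is CAT(0) if it is geodesic and satisfies the CN (comparison)
inequality of Bruhat–Tits for midpoints. -/
def CAT0 (X : Type*) [MetricSpace X] : Prop :=
  (∀ x y : X, ∃ γ : ℝ → X, γ 0 = x ∧ γ (dist x y) = y ∧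
    ∀ s ∈ Set.Icc (0 : ℝ) (dist x y), ∀ t ∈ Set.Icc (0 : ℝ) (dist x y),
      dist (γ s) (γ t) = |s - t|) ∧
  ∀ x y z m : X, dist y m = dist y z / 2 → dist z m = dist y z / 2 →
    dist x m ^ 2 ≤ (dist x y ^ 2 + dist x z ^ 2) / 2 - dist y z ^ 2 / 4

open Filter Topology Bornology

section Circumcentre

variable {X : Type*} [MetricSpace X] {S : Set X}

/-- `sup_{s ∈ S} d(x, s)`, with the junk value `0` when `S` is empty or unbounded. -/
noncomputable def radiusAbout (S : Set X) (x : X) : ℝ := sSup ((dist x ·) '' S)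

noncomputable def circumradius (S : Set X) : ℝ := ⨅ x, radiusAbout S x

lemma bddAbove_dist_image (hS : IsBounded S) (x : X) : BddAbove ((dist x ·) '' S) := by
  obtain ⟨r, hr⟩ := (Metric.isBounded_iff_subset_closedBall x).mp hS
  refine ⟨r, ?_⟩
  rintro _ ⟨s, hs, rfl⟩
  simpa [dist_comm] using hr hs

lemma dist_le_radiusAbout (hS : IsBounded S) (x : X) {s : X} (hs : s ∈ S) :
    dist x s ≤ radiusAbout S x :=
  le_csSup (bddAbove_dist_image hS x) ⟨s, hs, rfl⟩

lemma radiusAbout_le (hS : S.Nonempty) {x : X} {r : ℝ} (h : ∀ s ∈ S, dist x s ≤ r) :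
    radiusAbout S x ≤ r :=
  csSup_le (hS.image _) (by rintro _ ⟨s, hs, rfl⟩; exact h s hs)

lemma radiusAbout_nonneg (S : Set X) (x : X) : 0 ≤ radiusAbout S x :=
  Real.sSup_nonneg (by rintro _ ⟨s, -, rfl⟩; exact dist_nonneg)

lemma lipschitzWith_radiusAbout (hS : IsBounded S) (hS' : S.Nonempty) :
    LipschitzWith 1 (radiusAbout S) :=
  LipschitzWith.of_le_add fun x y => radiusAbout_le hS' fun s hs =>
    calc dist x s ≤ dist y s + dist x y := (dist_triangle x y s).trans_eq (add_comm _ _)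
      _ ≤ radiusAbout S y + dist x y := by gcongr; exact dist_le_radiusAbout hS y hs

lemma bddBelow_range_radiusAbout (S : Set X) : BddBelow (Set.range (radiusAbout S)) :=
  ⟨0, by rintro _ ⟨y, rfl⟩; exact radiusAbout_nonneg S y⟩

lemma circumradius_le_radiusAbout (S : Set X) (x : X) : circumradius S ≤ radiusAbout S x :=
  ciInf_le (bddBelow_range_radiusAbout S) x

lemma circumradius_nonneg (S : Set X) : 0 ≤ circumradius S :=
  Real.iInf_nonneg (radiusAbout_nonneg S)

lemma radiusAbout_le_of_isometry (hS : IsBounded S) (hS' : S.Nonempty) {f : X → X}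
    (hf : Isometry f) (hSf : S ⊆ f '' S) (x : X) : radiusAbout S (f x) ≤ radiusAbout S x :=
  radiusAbout_le hS' fun _ hs => by
    obtain ⟨t, ht, rfl⟩ := hSf hs
    exact (hf.dist_eq x t).trans_le (dist_le_radiusAbout hS x ht)

lemma cauchySeq_of_dist_sq_le_add {u : ℕ → X} {e : ℕ → ℝ} (he : Tendsto e atTop (𝓝 0))
    (h : ∀ m n, dist (u m) (u n) ^ 2 ≤ e m + e n) : CauchySeq u := by
  refine Metric.cauchySeq_iff.mpr fun ε hε => ?_
  obtain ⟨N, hN⟩ := eventually_atTop.mp (he.eventually (gt_mem_nhds (half_pos (pow_pos hε 2))))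
  refine ⟨N, fun m hm n hn => ?_⟩
  have := h m n
  have := hN m hm
  have := hN n hn
  exact (pow_lt_pow_iff_left₀ dist_nonneg hε.le two_ne_zero).mp (by linarith)

namespace CAT0

lemma exists_midpoint (hX : CAT0 X) (x y : X) :
    ∃ m, dist x m = dist x y / 2 ∧ dist y m = dist x y / 2 := by
  obtain ⟨γ, hγ0, hγ1, hγ⟩ := hX.1 x y
  have hd := dist_nonneg (x := x) (y := y)
  have hmid : dist x y / 2 ∈ Set.Icc 0 (dist x y) := ⟨by linarith, by linarith⟩
  refine ⟨γ (dist x y / 2), ?_, ?_⟩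
  · have h := hγ 0 ⟨le_rfl, hd⟩ _ hmid
    rwa [hγ0, zero_sub, abs_neg, abs_of_nonneg (by linarith)] at h
  · have h := hγ _ ⟨hd, le_rfl⟩ _ hmid
    rw [hγ1, abs_of_nonneg (by linarith)] at h
    linarith

lemma radiusAbout_sq_le_of_midpoint (hX : CAT0 X) (hS : IsBounded S) (hS' : S.Nonempty)
    {x y m : X} (hxm : dist x m = dist x y / 2) (hym : dist y m = dist x y / 2) :
    radiusAbout S m ^ 2 ≤
      (radiusAbout S x ^ 2 + radiusAbout S y ^ 2) / 2 - dist x y ^ 2 / 4 := by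
  set K := (radiusAbout S x ^ 2 + radiusAbout S y ^ 2) / 2 - dist x y ^ 2 / 4 with hK_def
  have hCN : ∀ s ∈ S, dist m s ^ 2 ≤ K := fun s hs => by
    have hx := dist_le_radiusAbout hS x hs
    have hy := dist_le_radiusAbout hS y hs
    rw [dist_comm] at hx hy ⊢
    have := hX.2 s x y m hxm hym
    have := pow_le_pow_left₀ dist_nonneg hx 2
    have := pow_le_pow_left₀ dist_nonneg hy 2
    linarith
  obtain ⟨s₀, hs₀⟩ := hS'
  have hK : 0 ≤ K := (sq_nonneg _).trans (hCN s₀ hs₀)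
  have : radiusAbout S m ≤ √K := radiusAbout_le ⟨s₀, hs₀⟩ fun s hs =>
    (Real.le_sqrt dist_nonneg hK).mpr (hCN s hs)
  exact (Real.le_sqrt (radiusAbout_nonneg S m) hK).mp this

lemma dist_sq_le (hX : CAT0 X) (hS : IsBounded S) (hS' : S.Nonempty) (x y : X) :
    dist x y ^ 2 ≤
      2 * radiusAbout S x ^ 2 + 2 * radiusAbout S y ^ 2 - 4 * circumradius S ^ 2 := by
  obtain ⟨m, hxm, hym⟩ := hX.exists_midpoint x y
  have hm := hX.radiusAbout_sq_le_of_midpoint hS hS' hxm hym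
  have := pow_le_pow_left₀ (circumradius_nonneg S) (circumradius_le_radiusAbout S m) 2
  linarith

lemma exists_radiusAbout_eq_circumradius [CompleteSpace X] (hX : CAT0 X) (hS : IsBounded S)
    (hS' : S.Nonempty) : ∃ c, radiusAbout S c = circumradius S := by
  have : Nonempty X := ⟨hS'.some⟩
  obtain ⟨r, -, hr, hrS⟩ :=
    exists_seq_tendsto_sInf (Set.range_nonempty (radiusAbout S)) (bddBelow_range_radiusAbout S)
  choose u hu using hrS
  have hlim : Tendsto (fun n => radiusAbout S (u n)) atTop (𝓝 (circumradius S)) := by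
    simp only [hu]
    exact hr
  have hcauchy : CauchySeq u := by
    refine cauchySeq_of_dist_sq_le_add
      (e := fun n => 2 * radiusAbout S (u n) ^ 2 - 2 * circumradius S ^ 2) ?_
      fun m n => by linarith [hX.dist_sq_le hS hS' (u m) (u n)]
    have := ((hlim.pow 2).const_mul 2).sub_const (2 * circumradius S ^ 2)
    rwa [sub_self] at this
  obtain ⟨c, hc⟩ := cauchySeq_tendsto_of_complete hcauchy
  exact ⟨c, tendsto_nhds_unique
    (((lipschitzWith_radiusAbout hS hS').continuous.tendsto c).comp hc) hlim⟩

lemma eq_of_radiusAbout_le_circumradius (hX : CAT0 X) (hS : IsBounded S) (hS' : S.Nonempty)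
    {x y : X} (hx : radiusAbout S x ≤ circumradius S) (hy : radiusAbout S y ≤ circumradius S) :
    x = y := by
  have := hX.dist_sq_le hS hS' x y
  have := pow_le_pow_left₀ (radiusAbout_nonneg S x) hx 2
  have := pow_le_pow_left₀ (radiusAbout_nonneg S y) hy 2
  exact dist_le_zero.mp (by nlinarith [dist_nonneg (x := x) (y := y)])

end CAT0

end Circumcentre

theorem bruhat_tits_fixed_point {X : Type*} [MetricSpace X] [CompleteSpace X]
    (hX : CAT0 X) (G : Type*) [Group G] [MulAction G X]
    (hiso : ∀ g : G, Isometry (fun x : X => g • x))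
    (hbdd : ∃ x : X, Bornology.IsBounded (Set.range fun g : G => g • x)) :
    ∃ x : X, ∀ g : G, g • x = x := by
  obtain ⟨x₀, hbdd⟩ := hbdd
  set S := Set.range fun g : G => g • x₀
  have hS : S.Nonempty := Set.range_nonempty _
  have hS_invariant (g : G) : S ⊆ (g • ·) '' S := by
    rintro _ ⟨h, rfl⟩
    exact ⟨(g⁻¹ * h) • x₀, ⟨_, rfl⟩, by simp [smul_smul]⟩
  obtain ⟨c, hc⟩ := hX.exists_radiusAbout_eq_circumradius hbdd hS
  refine ⟨c, fun g => hX.eq_of_radiusAbout_le_circumradius hbdd hS ?_ hc.le⟩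
  exact (radiusAbout_le_of_isometry hbdd hS (hiso g) (hS_invariant g) c).trans hc.le
end
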